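/- Let k = 2^i·ℓ be an even positive integer with ℓ odd and i ≥ 1, let K be an algebraic closure of 𝔽₂, let g_k(x,y) ∈ K[x,y] be the polynomial with (x+y)(x+1)(y+1)·g_k(x,y) = x·y^k + y·x^k + x^k + y^k + x + y, and let g_k = ∏_j f_j be a factorization of g_k into irreducible factors in K[x,y]. If P = (α, β) is a Type III singular point of g_k (α^ℓ = β^ℓ = 1, α ≠ β, α ≠ 1, β ≠ 1), then exactly one of the following holds: (1) exactly one factor f_{j₀} has m_P(f_{j₀}) = 2^i and all other factors f_j have m_P(f_j) = 0; or (2) exactly two factors f_{j₁} ≠ f_{j₂} have nonzero multiplicity at P, with m_P(f_{j₁}) = 1 and m_P(f_{j₂}) = 2^i − 1, and all other factors have multiplicity 0 at P. -/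

import Mathlib

open MvPolynomial

/-- The algebraic closure of `𝔽₂`. -/
abbrev Kbar : Type := AlgebraicClosure (ZMod 2)

/-- Translation of a bivariate polynomial, `h(x+α, y+β)`. -/
noncomputable def translatePoly (α β : Kbar) (h : MvPolynomial (Fin 2) Kbar) :
    MvPolynomial (Fin 2) Kbar :=
  aeval ![X 0 + C α, X 1 + C β] h

/-- The multiplicity `m_P(h)` of `h` at the point `P = (α, β)`: the least `m` such that the
degree-`m` homogeneous component of `h(x+α, y+β)` is nonzero. -/
noncomputable def multAt (α β : Kbar) (h : MvPolynomial (Fin 2) Kbar) : ℕ :=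
  sInf {m | homogeneousComponent m (translatePoly α β h) ≠ 0}

/-- The affine polynomial `f_k(x,y) = x·y^k + y·x^k + x^k + y^k + x + y` over `Kbar`. -/
noncomputable def fpoly (k : ℕ) : MvPolynomial (Fin 2) Kbar :=
  X 0 * X 1 ^ k + X 1 * X 0 ^ k + X 0 ^ k + X 1 ^ k + X 0 + X 1

namespace ST19

noncomputable section

abbrev R2 : Type := MvPolynomial (Fin 2) Kbar

lemma two_eq_zero_K : (2 : Kbar) = 0 := by
  simpa using CharP.cast_eq_zero Kbar 2

lemma two_eq_zero_R2 : (2 : R2) = 0 := by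
  simpa using CharP.cast_eq_zero R2 2

lemma two_eq_zero_Rt : (2 : Polynomial R2) = 0 := by
  simpa using CharP.cast_eq_zero (Polynomial R2) 2

lemma odd_cast_eq_one {S : Type} [CommRing S] (h2 : (2:S) = 0) {n : ℕ} (hn : Odd n) :
    (n : S) = 1 := by
  obtain ⟨m, rfl⟩ := hn
  push_cast
  rw [h2]
  ring

/-- The map sending a bivariate polynomial `p(x,y)` to `p(x·t, y·t)`, whose `t^m` coefficient
is the `m`-th homogeneous component. -/
def Phi : R2 →ₐ[Kbar] Polynomial R2 :=
  aeval ![Polynomial.C (X 0) * Polynomial.X, Polynomial.C (X 1) * Polynomial.X]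

lemma Phi_monomial (d : Fin 2 →₀ ℕ) (c : Kbar) :
    Phi (monomial d c) = Polynomial.C (monomial d c) * Polynomial.X ^ d.degree := by
  rw [Phi, aeval_monomial]
  have h0 : (d.prod fun i k =>
        ![Polynomial.C (X 0 : R2) * Polynomial.X, Polynomial.C (X 1 : R2) * Polynomial.X] i ^ k)
      = d.prod fun i k => (Polynomial.C (X i : R2) * Polynomial.X) ^ k := by
    apply Finsupp.prod_congr
    intro i _
    congr 1
    fin_cases i <;> rfl
  have h1 : (d.prod fun i k => (Polynomial.C (X i : R2) * Polynomial.X) ^ k)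
      = Polynomial.C (d.prod fun i k => (X i : R2) ^ k) * Polynomial.X ^ d.degree := by
    rw [Finsupp.prod, Finsupp.prod]
    rw [Finset.prod_congr rfl (fun i _ => mul_pow (Polynomial.C (X i : R2)) Polynomial.X (d i)),
      Finset.prod_mul_distrib]
    congr 1
    · simp_rw [← map_pow]
      rw [← map_prod]
    · rw [Finset.prod_pow_eq_pow_sum]
      rfl
  rw [h0, h1, monomial_eq]
  have h2 : algebraMap Kbar (Polynomial R2) c = Polynomial.C (C c) := by
    rw [Polynomial.algebraMap_apply, MvPolynomial.algebraMap_eq]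
  rw [h2, map_mul, mul_assoc]

lemma coeff_Phi (p : R2) (m : ℕ) : (Phi p).coeff m = homogeneousComponent m p := by
  induction p using MvPolynomial.induction_on' with
  | monomial d c =>
    rw [Phi_monomial, Polynomial.C_mul_X_pow_eq_monomial, Polynomial.coeff_monomial,
      homogeneousComponent_of_mem ((mem_homogeneousSubmodule _ _).mpr
        (isHomogeneous_monomial c rfl))]
    rcases eq_or_ne m d.degree with rfl | hne
    · simp
    · simp [hne, Ne.symm hne]
  | add p q hp hq =>
    rw [map_add, map_add, Polynomial.coeff_add, hp, hq]

lemma Phi_ne_zero {p : R2} (hp : p ≠ 0) : Phi p ≠ 0 := by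
  intro h
  apply hp
  rw [← sum_homogeneousComponent p]
  refine Finset.sum_eq_zero fun i _ => ?_
  rw [← coeff_Phi, h, Polynomial.coeff_zero]

lemma Phi_homog {h : R2} {a : ℕ} (hh : h.IsHomogeneous a) :
    Phi h = Polynomial.C h * Polynomial.X ^ a := by
  ext m
  rw [coeff_Phi, Polynomial.C_mul_X_pow_eq_monomial, Polynomial.coeff_monomial,
    homogeneousComponent_of_mem ((mem_homogeneousSubmodule _ _).mpr hh)]
  rcases eq_or_ne m a with rfl | hne
  · simp
  · simp [hne, Ne.symm hne]

/-- Translation as an algebra hom. -/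
def Ttr (α β : Kbar) : R2 →ₐ[Kbar] R2 := aeval ![X 0 + C α, X 1 + C β]

lemma translatePoly_eq (α β : Kbar) (h : R2) : translatePoly α β h = Ttr α β h := rfl

lemma Ttr_Ttr (α β : Kbar) (p : R2) : Ttr α β (Ttr α β p) = p := by
  have key : (Ttr α β).comp (Ttr α β) = AlgHom.id Kbar R2 := by
    apply MvPolynomial.algHom_ext
    intro n
    have hαα : ∀ γ : Kbar, γ + γ = 0 := fun γ => by
      linear_combination γ * two_eq_zero_K
    fin_cases n <;>
      simp [Ttr, AlgHom.comp_apply, map_add, aeval_X, aeval_C, MvPolynomial.algebraMap_eq] <;>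
      rw [add_assoc, ← map_add, hαα, map_zero, add_zero]
  calc Ttr α β (Ttr α β p) = ((Ttr α β).comp (Ttr α β)) p := rfl
  _ = p := by rw [key]; rfl

def psi (α β : Kbar) : R2 →ₐ[Kbar] Polynomial R2 := Phi.comp (Ttr α β)

lemma psi_apply (α β : Kbar) (h : R2) : psi α β h = Phi (translatePoly α β h) := rfl

lemma translatePoly_ne_zero (α β : Kbar) {h : R2} (h0 : h ≠ 0) : translatePoly α β h ≠ 0 := by
  intro hz
  apply h0
  have h1 : Ttr α β h = 0 := by rw [← translatePoly_eq]; exact hz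
  calc h = Ttr α β (Ttr α β h) := (Ttr_Ttr α β h).symm
  _ = 0 := by rw [h1, map_zero]

lemma psi_ne_zero (α β : Kbar) {h : R2} (h0 : h ≠ 0) : psi α β h ≠ 0 :=
  fun hz => Phi_ne_zero (translatePoly_ne_zero α β h0) (by rw [← psi_apply]; exact hz)

lemma multAt_eq (α β : Kbar) {h : R2} (h0 : h ≠ 0) :
    multAt α β h = (psi α β h).natTrailingDegree := by
  have hψ0 : psi α β h ≠ 0 := psi_ne_zero α β h0
  have hT0 : translatePoly α β h ≠ 0 := translatePoly_ne_zero α β h0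
  unfold multAt
  apply le_antisymm
  · apply Nat.sInf_le
    show homogeneousComponent _ _ ≠ 0
    rw [← coeff_Phi, ← psi_apply]
    exact Polynomial.trailingCoeff_nonzero_iff_nonzero.mpr hψ0
  · refine le_csInf ?_ ?_
    · by_contra hne
      rw [Set.not_nonempty_iff_eq_empty] at hne
      apply hT0
      rw [← sum_homogeneousComponent (translatePoly α β h)]
      refine Finset.sum_eq_zero fun j _ => ?_
      by_contra hj
      exact absurd (Set.eq_empty_iff_forall_notMem.mp hne j) (by simpa using hj)
    · intro m hm
      apply Polynomial.natTrailingDegree_le_of_ne_zero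
      rw [psi_apply, coeff_Phi]
      exact hm

lemma ntd_prod {ι : Type} (s : Finset ι) (p : ι → Polynomial R2) (h : ∀ j ∈ s, p j ≠ 0) :
    (∏ j ∈ s, p j).natTrailingDegree = ∑ j ∈ s, (p j).natTrailingDegree := by
  classical
  induction s using Finset.cons_induction with
  | empty => simp
  | cons a s ha ih =>
    rw [Finset.prod_cons, Finset.sum_cons,
      Polynomial.natTrailingDegree_mul (h a (Finset.mem_cons_self a s))
        (Finset.prod_ne_zero_iff.mpr fun j hj => h j (Finset.mem_cons_of_mem hj)),
      ih fun j hj => h j (Finset.mem_cons_of_mem hj)]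

lemma mul_coeff_one {S : Type} [CommSemiring S] (p q : Polynomial S) :
    (p * q).coeff 1 = p.coeff 0 * q.coeff 1 + p.coeff 1 * q.coeff 0 := by
  rw [Polynomial.coeff_mul, Finset.Nat.sum_antidiagonal_eq_sum_range_succ_mk,
    Finset.sum_range_succ, Finset.sum_range_one]

lemma low_coeffs {S : Type} [CommSemiring S] (p q : Polynomial S) (n : ℕ)
    (hq : ∀ m < n, q.coeff m = 0) :
    (p * q).coeff n = p.coeff 0 * q.coeff n ∧
      (p * q).coeff (n + 1) = p.coeff 0 * q.coeff (n + 1) + p.coeff 1 * q.coeff n := by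
  obtain ⟨r, hr⟩ := Polynomial.X_pow_dvd_iff.mpr hq
  have h1 : p * q = Polynomial.X ^ n * (p * r) := by rw [hr]; ring
  have hq0 : q.coeff n = r.coeff 0 := by
    rw [hr]; simpa using Polynomial.coeff_X_pow_mul r n 0
  have hq1 : q.coeff (n + 1) = r.coeff 1 := by
    rw [hr, add_comm n 1]; exact Polynomial.coeff_X_pow_mul r n 1
  constructor
  · rw [h1, hq0]
    have := Polynomial.coeff_X_pow_mul (p * r) n 0
    simpa [Polynomial.mul_coeff_zero] using this
  · rw [h1, hq0, hq1, add_comm n 1]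
    rw [Polynomial.coeff_X_pow_mul (p * r) n 1, mul_coeff_one]

lemma prime_X0 : Prime (X 0 : R2) := by
  let E := MvPolynomial.finSuccEquiv Kbar 1
  rw [← MulEquiv.prime_iff E.toRingEquiv.toMulEquiv]
  have h2 : E.toRingEquiv.toMulEquiv (X 0 : R2) = Polynomial.X :=
    MvPolynomial.finSuccEquiv_X_zero
  rw [h2]
  exact Polynomial.prime_X

lemma prime_lin {e f : Kbar} (he : e ≠ 0) : Prime (C e * X 0 + C f * X 1 : R2) := by
  have hCe : (C e⁻¹ : R2) * C e = 1 := by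
    rw [← map_mul, inv_mul_cancel₀ he, map_one]
  have hCe' : (C e : R2) * C e⁻¹ = 1 := by rw [mul_comm]; exact hCe
  have e5' : (C e : R2) * C (e⁻¹ * f) = C f := by
    rw [← map_mul, ← mul_assoc, mul_inv_cancel₀ he, one_mul]
  let τ : R2 →ₐ[Kbar] R2 := aeval ![C e * X 0 + C f * X 1, X 1]
  let σ' : R2 →ₐ[Kbar] R2 := aeval ![C e⁻¹ * X 0 - C (e⁻¹ * f) * X 1, X 1]
  have e1 : τ (C e⁻¹) = C e⁻¹ := by simp [τ, MvPolynomial.algebraMap_eq]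
  have e2 : τ (X 0) = C e * X 0 + C f * X 1 := by simp [τ]
  have e3 : τ (C (e⁻¹ * f)) = C (e⁻¹ * f) := by simp [τ, MvPolynomial.algebraMap_eq]
  have e4 : τ (X 1) = X 1 := by simp [τ]
  have f1 : σ' (C e) = C e := by simp [σ', MvPolynomial.algebraMap_eq]
  have f2 : σ' (X 0) = C e⁻¹ * X 0 - C (e⁻¹ * f) * X 1 := by simp [σ']
  have f3 : σ' (C f) = C f := by simp [σ', MvPolynomial.algebraMap_eq]
  have f4 : σ' (X 1) = X 1 := by simp [σ']
  have e5 : (C (e⁻¹ * f) : R2) = C e⁻¹ * C f := map_mul _ _ _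
  have h1 : τ.comp σ' = AlgHom.id Kbar R2 := by
    apply MvPolynomial.algHom_ext
    intro n
    fin_cases n
    · simp only [AlgHom.comp_apply, AlgHom.id_apply]
      show τ (σ' (X 0)) = X 0
      rw [f2, map_sub, map_mul, map_mul, e1, e2, e3, e4]
      linear_combination (X 0 : R2) * hCe - (X 1 : R2) * e5
    · simp only [AlgHom.comp_apply, AlgHom.id_apply]
      show τ (σ' (X 1)) = X 1
      rw [f4, e4]
  have h2 : σ'.comp τ = AlgHom.id Kbar R2 := by
    apply MvPolynomial.algHom_ext
    intro n
    fin_cases n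
    · simp only [AlgHom.comp_apply, AlgHom.id_apply]
      show σ' (τ (X 0)) = X 0
      rw [e2, map_add, map_mul, map_mul, f1, f2, f3, f4]
      linear_combination (X 0 : R2) * hCe' - (X 1 : R2) * e5'
    · simp only [AlgHom.comp_apply, AlgHom.id_apply]
      show σ' (τ (X 1)) = X 1
      rw [e4, f4]
  let E : R2 ≃ₐ[Kbar] R2 := AlgEquiv.ofAlgHom τ σ' h1 h2
  have hEX : E.toRingEquiv.toMulEquiv (X 0) = C e * X 0 + C f * X 1 := by
    show τ (X 0) = _
    exact e2
  have := (MulEquiv.prime_iff E.toRingEquiv.toMulEquiv).mpr prime_X0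
  rwa [hEX] at this

lemma sum_one_structure {n : ℕ} (v : Fin n → ℕ) (s : Finset (Fin n))
    (hs : ∑ j ∈ s, v j = 1) :
    ∃ j₁ ∈ s, v j₁ = 1 ∧ ∀ j ∈ s, j ≠ j₁ → v j = 0 := by
  classical
  have hne : ∃ j ∈ s, v j ≠ 0 := by
    by_contra hc
    push_neg at hc
    rw [Finset.sum_eq_zero hc] at hs
    omega
  obtain ⟨j₁, hj₁s, hj₁⟩ := hne
  have hle : v j₁ ≤ 1 := hs ▸ Finset.single_le_sum (fun _ _ => Nat.zero_le _) hj₁s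
  have hv1 : v j₁ = 1 := by omega
  refine ⟨j₁, hj₁s, hv1, fun j hjs hjne => ?_⟩
  have herase : v j₁ + ∑ x ∈ s.erase j₁, v x = 1 := by
    rw [Finset.add_sum_erase s v hj₁s, hs]
  have hz : ∑ x ∈ s.erase j₁, v x = 0 := by omega
  exact (Finset.sum_eq_zero_iff.mp hz) j (Finset.mem_erase.mpr ⟨hjne, hjs⟩)

lemma comb {n N : ℕ} (v : Fin n → ℕ) (hsum : ∑ j, v j = N) (hN : N = 2 ∨ 4 ≤ N) :
    (∃ j₀, v j₀ = N ∧ ∀ j, j ≠ j₀ → v j = 0) ∨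
    (∃ j₁ j₂, j₁ ≠ j₂ ∧ v j₁ = 1 ∧ v j₂ = N - 1 ∧ ∀ j, j ≠ j₁ → j ≠ j₂ → v j = 0) ∨
    (∃ T : Finset (Fin n), 2 ≤ ∑ j ∈ T, v j ∧ 2 ≤ ∑ j ∈ Tᶜ, v j) := by
  classical
  have hN2 : 2 ≤ N := by omega
  have hnuniv : (Finset.univ : Finset (Fin n)).Nonempty := by
    by_contra hc
    rw [Finset.not_nonempty_iff_eq_empty] at hc
    rw [hc] at hsum
    simp at hsum
    omega
  obtain ⟨j₀, -, hmax⟩ := Finset.exists_max_image Finset.univ v hnuniv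
  have hsum' : v j₀ + ∑ j ∈ Finset.univ.erase j₀, v j = N := by
    rw [Finset.add_sum_erase _ v (Finset.mem_univ j₀), hsum]
  by_cases hrest : ∑ j ∈ Finset.univ.erase j₀, v j = 0
  · left
    refine ⟨j₀, by omega, fun j hj => ?_⟩
    exact (Finset.sum_eq_zero_iff.mp hrest) j (Finset.mem_erase.mpr ⟨hj, Finset.mem_univ j⟩)
  · by_cases hbig : 2 ≤ v j₀
    · by_cases hrest2 : 2 ≤ ∑ j ∈ Finset.univ.erase j₀, v j
      · right; right
        refine ⟨{j₀}, ?_, ?_⟩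
        · rw [Finset.sum_singleton]; exact hbig
        · rw [Finset.compl_singleton]; exact hrest2
      · -- rest sum = 1
        have hrest1 : ∑ j ∈ Finset.univ.erase j₀, v j = 1 := by omega
        obtain ⟨j₁, hj₁mem, hv1, hz⟩ := sum_one_structure v _ hrest1
        have hj₁ne : j₁ ≠ j₀ := (Finset.mem_erase.mp hj₁mem).1
        right; left
        refine ⟨j₁, j₀, hj₁ne, hv1, by omega, fun j hja hjb => ?_⟩
        exact hz j (Finset.mem_erase.mpr ⟨hjb, Finset.mem_univ j⟩) hja
    · -- all values ≤ 1
      have hallle : ∀ j, v j ≤ 1 := fun j => by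
        have := hmax j (Finset.mem_univ j); omega
      set s := Finset.univ.filter (fun j => v j ≠ 0) with hsdef
      have hone : ∀ j ∈ s, v j = 1 := fun j hj => by
        have := (Finset.mem_filter.mp hj).2
        have := hallle j
        omega
      have hcard : s.card = N := by
        have h1 : ∑ j ∈ s, v j = N := by
          rw [hsdef, Finset.sum_filter_ne_zero, hsum]
        rw [← h1, Finset.sum_congr rfl hone]
        simp
      rcases hN with hN | hN
      · -- N = 2, s = {x, y}
        obtain ⟨x, y, hxy, hsxy⟩ := Finset.card_eq_two.mp (by omega : s.card = 2)
        right; left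
        refine ⟨x, y, hxy, hone x (by rw [hsxy]; simp), ?_, fun j hja hjb => ?_⟩
        · rw [hN]
          exact hone y (by rw [hsxy]; simp)
        · by_contra hjz
          have : j ∈ s := Finset.mem_filter.mpr ⟨Finset.mem_univ j, hjz⟩
          rw [hsxy] at this
          simp at this
          tauto
      · -- 4 ≤ N
        obtain ⟨T, hTs, hTcard⟩ := Finset.exists_subset_card_eq (by omega : 2 ≤ s.card)
        right; right
        have hT2 : ∑ j ∈ T, v j = 2 := by
          rw [Finset.sum_congr rfl (fun j hj => hone j (hTs hj))]
          simp [hTcard]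
        have hTc : ∑ j ∈ T, v j + ∑ j ∈ Tᶜ, v j = N := by
          rw [Finset.sum_add_sum_compl, hsum]
        exact ⟨T, by omega, by omega⟩

lemma Phi_X (j : Fin 2) : Phi (X j) = Polynomial.C (X j) * Polynomial.X := by
  fin_cases j <;> simp [Phi]

lemma Phi_C (a : Kbar) : Phi (C a) = Polynomial.C (C a) := by
  rw [Phi, aeval_C, Polynomial.algebraMap_apply, MvPolynomial.algebraMap_eq]

lemma psi_X0 (α β : Kbar) :
    psi α β (X 0) = Polynomial.C (X 0) * Polynomial.X + Polynomial.C (C α) := by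
  have h : Ttr α β (X 0) = X 0 + C α := by simp [Ttr]
  show Phi (Ttr α β (X 0)) = _
  rw [h, map_add, Phi_X, Phi_C]

lemma psi_X1 (α β : Kbar) :
    psi α β (X 1) = Polynomial.C (X 1) * Polynomial.X + Polynomial.C (C β) := by
  have h : Ttr α β (X 1) = X 1 + C β := by simp [Ttr]
  show Phi (Ttr α β (X 1)) = _
  rw [h, map_add, Phi_X, Phi_C]

lemma Fform (i ℓ k : ℕ) (hi : 1 ≤ i) (hℓ : Odd ℓ) (hk : k = 2 ^ i * ℓ) (α β : Kbar) :
    psi α β (fpoly k) =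
      ((psi α β (X 1)) ^ ℓ + 1) ^ 2 ^ i * (psi α β (X 0) + 1) +
      ((psi α β (X 0)) ^ ℓ + 1) ^ 2 ^ i * (psi α β (X 1) + 1) := by
  have h1 : fpoly k = X 0 * X 1 ^ k + X 1 * X 0 ^ k + X 0 ^ k + X 1 ^ k + X 0 + X 1 := rfl
  rw [h1]
  simp only [map_add, map_mul, map_pow]
  set x := psi α β (X 0)
  set y := psi α β (X 1)
  have hid : x * y ^ k + y * x ^ k + x ^ k + y ^ k + x + y
      = (y ^ k + 1) * (x + 1) + (x ^ k + 1) * (y + 1) := by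
    linear_combination -two_eq_zero_Rt
  rw [hid]
  have hpow : ∀ w : Polynomial R2, w ^ k + 1 = (w ^ ℓ + 1) ^ 2 ^ i := by
    intro w
    rw [add_pow_char_pow, one_pow, ← pow_mul, mul_comm ℓ (2 ^ i), ← hk]
  rw [hpow, hpow]

lemma Q_coeff0 (ℓ : ℕ) (γ : Kbar) (hγ : γ ^ ℓ = 1) (r : R2) :
    ((Polynomial.C r * Polynomial.X + Polynomial.C (C γ)) ^ ℓ + 1).coeff 0 = 0 := by
  have h1 : Polynomial.eval 0 (Polynomial.C r * Polynomial.X + Polynomial.C (C γ)) = C γ := by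
    simp
  rw [Polynomial.coeff_zero_eq_eval_zero, Polynomial.eval_add, Polynomial.eval_pow, h1,
    Polynomial.eval_one, ← map_pow, hγ, map_one]
  linear_combination two_eq_zero_R2

lemma Q_coeff1 (ℓ : ℕ) (hℓ : Odd ℓ) (γ : Kbar) (r : R2) :
    ((Polynomial.C r * Polynomial.X + Polynomial.C (C γ)) ^ ℓ + 1).coeff 1
      = C (γ ^ (ℓ - 1)) * r := by
  have hco : ∀ p : Polynomial R2, p.coeff 1 = (Polynomial.derivative p).coeff 0 := by
    intro p
    rw [Polynomial.coeff_derivative]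
    simp
  rw [hco, Polynomial.derivative_add, Polynomial.derivative_one, add_zero,
    Polynomial.derivative_pow]
  have hder : Polynomial.derivative (Polynomial.C r * Polynomial.X + Polynomial.C (C γ))
      = Polynomial.C r := by simp
  rw [hder, Polynomial.coeff_zero_eq_eval_zero, Polynomial.eval_mul, Polynomial.eval_mul,
    Polynomial.eval_pow, Polynomial.eval_C, Polynomial.eval_C]
  have h1 : Polynomial.eval 0 (Polynomial.C r * Polynomial.X + Polynomial.C (C γ)) = C γ := by
    simp
  rw [h1, ← map_pow, odd_cast_eq_one two_eq_zero_R2 hℓ, one_mul]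

lemma pow_coeff_facts (Q : Polynomial R2) (i : ℕ) (hi : 1 ≤ i) (h0 : Q.coeff 0 = 0) :
    ∃ Q1 : Polynomial R2, Q = Polynomial.X * Q1 ∧
      (Q1 ^ 2 ^ i).coeff 0 = (Q.coeff 1) ^ 2 ^ i ∧ (Q1 ^ 2 ^ i).coeff 1 = 0 := by
  obtain ⟨Q1, hQ1⟩ := Polynomial.X_dvd_iff.mpr h0
  refine ⟨Q1, hQ1, ?_, ?_⟩
  · have h1 : Q.coeff 1 = Q1.coeff 0 := by rw [hQ1]; exact Polynomial.coeff_X_mul Q1 0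
    rw [h1, Polynomial.coeff_zero_eq_eval_zero, Polynomial.eval_pow,
      ← Polynomial.coeff_zero_eq_eval_zero]
  · have hcast : ((2 ^ i : ℕ) : R2) = 0 := by
      push_cast
      rw [two_eq_zero_R2, zero_pow (by omega : i ≠ 0)]
    have hder : Polynomial.derivative (Q1 ^ 2 ^ i) = 0 := by
      rw [Polynomial.derivative_pow, hcast]
      simp
    have h2 : (Q1 ^ 2 ^ i).coeff 1 = (Polynomial.derivative (Q1 ^ 2 ^ i)).coeff 0 := by
      rw [Polynomial.coeff_derivative]
      simp
    rw [h2, hder, Polynomial.coeff_zero]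

set_option maxHeartbeats 2000000 in
theorem main
    (i ℓ k : ℕ) (hi : 1 ≤ i) (hℓ : Odd ℓ) (hk : k = 2 ^ i * ℓ)
    (g : MvPolynomial (Fin 2) Kbar)
    (hg : (X 0 + X 1) * (X 0 + 1) * (X 1 + 1) * g = fpoly k)
    (n : ℕ) (f : Fin n → MvPolynomial (Fin 2) Kbar)
    (hirr : ∀ j, Irreducible (f j)) (hprod : ∏ j, f j = g)
    (α β : Kbar) (hα : α ^ ℓ = 1) (hβ : β ^ ℓ = 1)
    (hαβ : α ≠ β) (hα1 : α ≠ 1) (hβ1 : β ≠ 1) :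
    Xor'
      (∃ j₀ : Fin n, multAt α β (f j₀) = 2 ^ i ∧
        ∀ j : Fin n, j ≠ j₀ → multAt α β (f j) = 0)
      (∃ j₁ j₂ : Fin n, j₁ ≠ j₂ ∧
        multAt α β (f j₁) = 1 ∧ multAt α β (f j₂) = 2 ^ i - 1 ∧
        ∀ j : Fin n, j ≠ j₁ → j ≠ j₂ → multAt α β (f j) = 0) := by
  classical
  have h2K := two_eq_zero_K
  have h2R := two_eq_zero_R2
  have h2i2 : 2 ≤ 2 ^ i := by
    calc 2 = 2 ^ 1 := (pow_one 2).symm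
    _ ≤ 2 ^ i := Nat.pow_le_pow_right (by norm_num) hi
  have hℓpos : 0 < ℓ := hℓ.pos
  have hα0 : α ≠ 0 := fun h => one_ne_zero (α := Kbar) (by rw [← hα, h, zero_pow hℓpos.ne'])
  have hβ0 : β ≠ 0 := fun h => one_ne_zero (α := Kbar) (by rw [← hβ, h, zero_pow hℓpos.ne'])
  have hαβ' : α + β ≠ 0 := fun h => hαβ (by linear_combination h - β * h2K)
  have hα1' : α + 1 ≠ 0 := fun h => hα1 (by linear_combination h - h2K)
  have hβ1' : β + 1 ≠ 0 := fun h => hβ1 (by linear_combination h - h2K)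
  -- the translated linear factors
  obtain ⟨u0, hu0⟩ : ∃ u, u = psi α β (X 0) := ⟨_, rfl⟩
  obtain ⟨u1, hu1⟩ : ∃ u, u = psi α β (X 1) := ⟨_, rfl⟩
  have hu0e : u0 = Polynomial.C (X 0) * Polynomial.X + Polynomial.C (C α) := by
    rw [hu0, psi_X0]
  have hu1e : u1 = Polynomial.C (X 1) * Polynomial.X + Polynomial.C (C β) := by
    rw [hu1, psi_X1]
  have hu0c0 : (u0 + 1).coeff 0 = C α + 1 := by rw [hu0e]; simp
  have hu1c0 : (u1 + 1).coeff 0 = C β + 1 := by rw [hu1e]; simp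
  have hu0c1 : (u0 + 1).coeff 1 = X 0 := by rw [hu0e]; simp [Polynomial.coeff_one]
  have hu1c1 : (u1 + 1).coeff 1 = X 1 := by rw [hu1e]; simp [Polynomial.coeff_one]
  have hu0c0' : u0.coeff 0 = C α := by rw [hu0e]; simp
  have hu1c0' : u1.coeff 0 = C β := by rw [hu1e]; simp
  have hQA0 : (u0 ^ ℓ + 1).coeff 0 = 0 := by rw [hu0e]; exact Q_coeff0 ℓ α hα (X 0)
  have hQB0 : (u1 ^ ℓ + 1).coeff 0 = 0 := by rw [hu1e]; exact Q_coeff0 ℓ β hβ (X 1)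
  have hQA1 : (u0 ^ ℓ + 1).coeff 1 = C (α ^ (ℓ - 1)) * X 0 := by
    rw [hu0e]; exact Q_coeff1 ℓ hℓ α (X 0)
  have hQB1 : (u1 ^ ℓ + 1).coeff 1 = C (β ^ (ℓ - 1)) * X 1 := by
    rw [hu1e]; exact Q_coeff1 ℓ hℓ β (X 1)
  obtain ⟨QA1, hQA1f, hQA1c0, hQA1c1⟩ := pow_coeff_facts (u0 ^ ℓ + 1) i hi hQA0
  obtain ⟨QB1, hQB1f, hQB1c0, hQB1c1⟩ := pow_coeff_facts (u1 ^ ℓ + 1) i hi hQB0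
  rw [hQA1] at hQA1c0
  rw [hQB1] at hQB1c0
  have hFform : psi α β (fpoly k) =
      (u1 ^ ℓ + 1) ^ 2 ^ i * (u0 + 1) + (u0 ^ ℓ + 1) ^ 2 ^ i * (u1 + 1) := by
    rw [Fform i ℓ k hi hℓ hk α β, ← hu0, ← hu1]
  obtain ⟨G2, hG2⟩ : ∃ G2, G2 = QB1 ^ 2 ^ i * (u0 + 1) + QA1 ^ 2 ^ i * (u1 + 1) := ⟨_, rfl⟩
  have hFX : psi α β (fpoly k) = Polynomial.X ^ 2 ^ i * G2 := by
    rw [hFform, hQA1f, hQB1f, hG2]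
    ring
  have hFlow : ∀ m < 2 ^ i, (psi α β (fpoly k)).coeff m = 0 :=
    Polynomial.X_pow_dvd_iff.mp ⟨G2, hFX⟩
  have hF2i : (psi α β (fpoly k)).coeff (2 ^ i) =
      (C (β ^ (ℓ - 1)) * X 1) ^ 2 ^ i * (C α + 1) +
        (C (α ^ (ℓ - 1)) * X 0) ^ 2 ^ i * (C β + 1) := by
    have h1 : (psi α β (fpoly k)).coeff (2 ^ i) = G2.coeff 0 := by
      rw [hFX]
      simpa using Polynomial.coeff_X_pow_mul G2 (2 ^ i) 0
    rw [h1, hG2, Polynomial.coeff_add, Polynomial.mul_coeff_zero, Polynomial.mul_coeff_zero,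
      hQA1c0, hQB1c0, hu0c0, hu1c0]
  have hF2i1 : (psi α β (fpoly k)).coeff (2 ^ i + 1) =
      (C (β ^ (ℓ - 1)) * X 1) ^ 2 ^ i * X 0 + (C (α ^ (ℓ - 1)) * X 0) ^ 2 ^ i * X 1 := by
    have h1 : (psi α β (fpoly k)).coeff (2 ^ i + 1) = G2.coeff 1 := by
      rw [hFX, add_comm (2 ^ i) 1]
      exact Polynomial.coeff_X_pow_mul G2 (2 ^ i) 1
    rw [h1, hG2, Polynomial.coeff_add, mul_coeff_one, mul_coeff_one,
      hQA1c0, hQB1c0, hQA1c1, hQB1c1, hu0c0, hu1c0, hu0c1, hu1c1]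
    ring
  -- the tangent-cone linear form M
  have ha1 : α ^ (ℓ - 1) ≠ 0 := pow_ne_zero _ hα0
  have hb1 : β ^ (ℓ - 1) ≠ 0 := pow_ne_zero _ hβ0
  obtain ⟨ee, hee⟩ := IsAlgClosed.exists_pow_nat_eq ((α ^ (ℓ - 1)) ^ 2 ^ i * (β + 1))
    (by positivity : 0 < 2 ^ i)
  obtain ⟨ff, hff⟩ := IsAlgClosed.exists_pow_nat_eq ((β ^ (ℓ - 1)) ^ 2 ^ i * (α + 1))
    (by positivity : 0 < 2 ^ i)
  have hee0 : ee ≠ 0 := by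
    intro h
    rw [h, zero_pow (by positivity : (2 : ℕ) ^ i ≠ 0)] at hee
    exact mul_ne_zero (pow_ne_zero _ ha1) hβ1' hee.symm
  have hff0 : ff ≠ 0 := by
    intro h
    rw [h, zero_pow (by positivity : (2 : ℕ) ^ i ≠ 0)] at hff
    exact mul_ne_zero (pow_ne_zero _ hb1) hα1' hff.symm
  obtain ⟨M, hM⟩ : ∃ M : R2, M = C ee * X 0 + C ff * X 1 := ⟨_, rfl⟩
  have hMprime : Prime M := by rw [hM]; exact prime_lin hee0
  have hMhom : M.IsHomogeneous 1 := by
    rw [hM]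
    exact (isHomogeneous_C_mul_X ee 0).add (isHomogeneous_C_mul_X ff 1)
  have hMpow : M ^ 2 ^ i =
      (C (β ^ (ℓ - 1)) * X 1) ^ 2 ^ i * (C α + 1) +
        (C (α ^ (ℓ - 1)) * X 0) ^ 2 ^ i * (C β + 1) := by
    rw [hM, add_pow_char_pow, mul_pow, mul_pow, mul_pow, mul_pow,
      ← map_pow, ← map_pow, ← map_pow, ← map_pow, hee, hff, map_mul, map_mul,
      map_add, map_add, map_one]
    ring
  have hM0 : M ≠ 0 := by
    intro h
    have h2 : eval ![(1 : Kbar), 0] (C ee * X 0 + C ff * X 1) = 0 := by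
      rw [← hM, h, map_zero]
    simp at h2
    exact hee0 h2
  have hF2iM : (psi α β (fpoly k)).coeff (2 ^ i) = M ^ 2 ^ i := by rw [hF2i, ← hMpow]
  have hF0 : psi α β (fpoly k) ≠ 0 := by
    intro h
    rw [h, Polynomial.coeff_zero] at hF2iM
    exact pow_ne_zero (2 ^ i) hM0 hF2iM.symm
  -- the denominator D
  obtain ⟨Dψ, hDψ⟩ : ∃ D, D = psi α β ((X 0 + X 1) * (X 0 + 1) * (X 1 + 1)) := ⟨_, rfl⟩
  have hFD : Dψ * psi α β g = psi α β (fpoly k) := by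
    rw [hDψ, ← map_mul, hg]
  have hDc0 : Dψ.coeff 0 = C ((α + β) * (α + 1) * (β + 1)) := by
    have hD1 : Dψ = (u0 + u1) * (u0 + 1) * (u1 + 1) := by
      rw [hDψ, map_mul, map_mul, map_add, map_add, map_add, map_one, ← hu0, ← hu1]
    rw [hD1, Polynomial.mul_coeff_zero, Polynomial.mul_coeff_zero, Polynomial.coeff_add,
      hu0c0', hu1c0', hu0c0, hu1c0]
    simp [map_add, map_mul, map_one]
  have hc00 : (α + β) * (α + 1) * (β + 1) ≠ 0 :=
    mul_ne_zero (mul_ne_zero hαβ' hα1') hβ1'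
  have hCc0ne : (C ((α + β) * (α + 1) * (β + 1)) : R2) ≠ 0 := by
    rw [Ne, MvPolynomial.C_eq_zero]
    exact hc00
  have hD0 : Dψ ≠ 0 := by
    intro h
    rw [h, Polynomial.coeff_zero] at hDc0
    exact hCc0ne hDc0.symm
  have hg0 : g ≠ 0 := by
    intro h
    apply hF0
    rw [← hFD, h, map_zero, mul_zero]
  have hG0 : psi α β g ≠ 0 := psi_ne_zero α β hg0
  have hntdF : (psi α β (fpoly k)).natTrailingDegree = 2 ^ i :=
    le_antisymm
      (Polynomial.natTrailingDegree_le_of_ne_zero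
        (by rw [hF2iM]; exact pow_ne_zero _ hM0))
      (Polynomial.le_natTrailingDegree hF0 hFlow)
  have hntdD : Dψ.natTrailingDegree = 0 :=
    Nat.le_zero.mp (Polynomial.natTrailingDegree_le_of_ne_zero
      (by rw [hDc0]; exact hCc0ne))
  have hntdG : (psi α β g).natTrailingDegree = 2 ^ i := by
    have h := Polynomial.natTrailingDegree_mul hD0 hG0
    rw [hFD, hntdF, hntdD, zero_add] at h
    exact h.symm
  have hGlow : ∀ m < 2 ^ i, (psi α β g).coeff m = 0 := fun m hm =>
    Polynomial.coeff_eq_zero_of_lt_natTrailingDegree (by rw [hntdG]; exact hm)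
  have hlc := low_coeffs Dψ (psi α β g) (2 ^ i) hGlow
  have hGc2i : C ((α + β) * (α + 1) * (β + 1)) * (psi α β g).coeff (2 ^ i) = M ^ 2 ^ i := by
    rw [← hDc0, ← hlc.1, hFD, hF2iM]
  have hGc2i1 : (psi α β (fpoly k)).coeff (2 ^ i + 1) =
      C ((α + β) * (α + 1) * (β + 1)) * (psi α β g).coeff (2 ^ i + 1) +
        Dψ.coeff 1 * (psi α β g).coeff (2 ^ i) := by
    rw [← hDc0, ← hlc.2, hFD]
  -- evaluation point killing M
  have hevM : eval ![ff, ee] M = 0 := by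
    simp only [hM, map_add, map_mul, eval_C, eval_X, Matrix.cons_val_zero,
      Matrix.cons_val_one, Matrix.head_cons]
    linear_combination (ee * ff) * h2K
  have hdvdeval : ∀ w : R2, M ∣ w → eval ![ff, ee] w = 0 := by
    rintro w ⟨u, rfl⟩
    rw [map_mul, hevM, zero_mul]
  have hMX0 : ¬ M ∣ X 0 := fun h => hff0 (by simpa using hdvdeval _ h)
  have hMX1 : ¬ M ∣ X 1 := fun h => hee0 (by simpa using hdvdeval _ h)
  -- multiplicities of the factors
  have hfne : ∀ j, f j ≠ 0 := fun j => (hirr j).ne_zero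
  have hvntd : ∀ j : Fin n, multAt α β (f j) = (psi α β (f j)).natTrailingDegree :=
    fun j => multAt_eq α β (hfne j)
  have hsumv : ∑ j, multAt α β (f j) = 2 ^ i := by
    rw [Finset.sum_congr rfl fun j _ => hvntd j,
      ← ntd_prod Finset.univ (fun j => psi α β (f j))
        (fun j _ => psi_ne_zero α β (hfne j)),
      ← map_prod, hprod, hntdG]
  -- no balanced splitting
  have hnosplit : ∀ T : Finset (Fin n),
      2 ≤ ∑ j ∈ T, multAt α β (f j) → 2 ≤ ∑ j ∈ Tᶜ, multAt α β (f j) → False := by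
    intro T hT hTc
    obtain ⟨p, hp⟩ : ∃ p, p = ∏ j ∈ T, f j := ⟨_, rfl⟩
    obtain ⟨q, hq⟩ : ∃ q, q = ∏ j ∈ Tᶜ, f j := ⟨_, rfl⟩
    have hp0 : p ≠ 0 := by rw [hp]; exact Finset.prod_ne_zero_iff.mpr fun j _ => hfne j
    have hq0 : q ≠ 0 := by rw [hq]; exact Finset.prod_ne_zero_iff.mpr fun j _ => hfne j
    have hpq : p * q = g := by rw [hp, hq, Finset.prod_mul_prod_compl, hprod]
    have hP0 : psi α β p ≠ 0 := psi_ne_zero α β hp0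
    have hQ0 : psi α β q ≠ 0 := psi_ne_zero α β hq0
    have hntdP : (psi α β p).natTrailingDegree = ∑ j ∈ T, multAt α β (f j) := by
      rw [hp, map_prod, ntd_prod T _ (fun j _ => psi_ne_zero α β (hfne j))]
      exact Finset.sum_congr rfl fun j _ => (hvntd j).symm
    have hntdQ : (psi α β q).natTrailingDegree = ∑ j ∈ Tᶜ, multAt α β (f j) := by
      rw [hq, map_prod, ntd_prod Tᶜ _ (fun j _ => psi_ne_zero α β (hfne j))]
      exact Finset.sum_congr rfl fun j _ => (hvntd j).symm
    have haP : 2 ≤ (psi α β p).natTrailingDegree := by rw [hntdP]; exact hT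
    have haQ : 2 ≤ (psi α β q).natTrailingDegree := by rw [hntdQ]; exact hTc
    have hGpq : psi α β g = psi α β p * psi α β q := by rw [← map_mul, hpq]
    have hab : (psi α β p).natTrailingDegree + (psi α β q).natTrailingDegree = 2 ^ i := by
      have h := Polynomial.natTrailingDegree_mul hP0 hQ0
      rw [← hGpq, hntdG] at h
      exact h.symm
    have hTCG : (psi α β g).trailingCoeff = (psi α β g).coeff (2 ^ i) := by
      rw [Polynomial.trailingCoeff, hntdG]
    have hTT : C ((α + β) * (α + 1) * (β + 1)) *
        ((psi α β p).trailingCoeff * (psi α β q).trailingCoeff) = M ^ 2 ^ i := by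
      rw [← Polynomial.trailingCoeff_mul, ← hGpq, hTCG, hGc2i]
    have key : ∀ r : R2, r ≠ 0 →
        (psi α β r).trailingCoeff.IsHomogeneous ((psi α β r).natTrailingDegree) := by
      intro r hr
      have h1 : (psi α β r).trailingCoeff
          = homogeneousComponent ((psi α β r).natTrailingDegree) (translatePoly α β r) :=
        coeff_Phi (translatePoly α β r) ((psi α β r).natTrailingDegree)
      rw [h1]
      exact homogeneousComponent_isHomogeneous _ _
    have hdvd2 : ∀ r : R2, r ≠ 0 → 2 ≤ (psi α β r).natTrailingDegree →
        (psi α β r).trailingCoeff ∣ M ^ 2 ^ i → M ^ 2 ∣ (psi α β r).trailingCoeff := by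
      intro r hr h2r hdvd
      obtain ⟨jp, hjple, w, hw⟩ := (dvd_prime_pow hMprime (2 ^ i)).mp hdvd
      have hTP0 : (psi α β r).trailingCoeff ≠ 0 :=
        Polynomial.trailingCoeff_nonzero_iff_nonzero.mpr (psi_ne_zero α β hr)
      have hTPeq : (psi α β r).trailingCoeff = M ^ jp * ((w⁻¹ : R2ˣ) : R2) := by
        rw [← hw]
        exact (Units.mul_inv_cancel_right _ w).symm
      have hjge : 2 ≤ jp := by
        by_contra hlt
        have hnd : (Phi ((psi α β r).trailingCoeff)).natDegree
            = (psi α β r).natTrailingDegree := by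
          rw [Phi_homog (key r hr), Polynomial.natDegree_C_mul_X_pow _ _ hTP0]
        have hMXdeg : Phi M = Polynomial.C M * Polynomial.X ^ 1 := Phi_homog hMhom
        have hrhs : Phi ((psi α β r).trailingCoeff)
            = (Polynomial.C M * Polynomial.X ^ 1) ^ jp * Phi ((w⁻¹ : R2ˣ) : R2) := by
          rw [hTPeq, map_mul, map_pow, hMXdeg]
        have hMne : (Polynomial.C M * Polynomial.X ^ 1) ^ jp ≠ 0 := by
          rw [← hMXdeg, ← map_pow]
          exact Phi_ne_zero (pow_ne_zero _ hM0)
        have hwne2 : Phi ((w⁻¹ : R2ˣ) : R2) ≠ 0 := Phi_ne_zero (Units.ne_zero _)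
        have h1 : ((Polynomial.C M * Polynomial.X ^ 1) ^ jp).natDegree = jp := by
          rw [Polynomial.natDegree_pow, Polynomial.natDegree_C_mul_X_pow _ _ hM0, mul_one]
        have h2 : (Phi ((w⁻¹ : R2ˣ) : R2)).natDegree = 0 :=
          Polynomial.natDegree_eq_zero_of_isUnit (IsUnit.map Phi (Units.isUnit w⁻¹))
        have h3 : (Phi ((psi α β r).trailingCoeff)).natDegree = jp := by
          rw [hrhs, Polynomial.natDegree_mul hMne hwne2, h1, h2, add_zero]
        omega
      exact dvd_trans (pow_dvd_pow M hjge) ⟨((w⁻¹ : R2ˣ) : R2), hTPeq⟩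
    have hdvdP : M ^ 2 ∣ (psi α β p).trailingCoeff := by
      apply hdvd2 p hp0 haP
      refine ⟨C ((α + β) * (α + 1) * (β + 1)) * (psi α β q).trailingCoeff, ?_⟩
      rw [← hTT]; ring
    have hdvdQ : M ^ 2 ∣ (psi α β q).trailingCoeff := by
      apply hdvd2 q hq0 haQ
      refine ⟨C ((α + β) * (α + 1) * (β + 1)) * (psi α β p).trailingCoeff, ?_⟩
      rw [← hTT]; ring
    obtain ⟨P1, hP1⟩ := Polynomial.X_pow_dvd_iff.mpr
      (fun d hd => Polynomial.coeff_eq_zero_of_lt_natTrailingDegree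
        (p := psi α β p) hd)
    obtain ⟨Q1, hQ1⟩ := Polynomial.X_pow_dvd_iff.mpr
      (fun d hd => Polynomial.coeff_eq_zero_of_lt_natTrailingDegree
        (p := psi α β q) hd)
    have hGXX : psi α β g = Polynomial.X ^ 2 ^ i * (P1 * Q1) := by
      rw [hGpq, hP1, hQ1, ← hab]; ring
    have hP1c0 : (psi α β p).trailingCoeff = P1.coeff 0 := by
      have h := Polynomial.coeff_X_pow_mul P1 ((psi α β p).natTrailingDegree) 0
      rw [zero_add, ← hP1] at h
      rw [Polynomial.trailingCoeff]
      exact h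
    have hQ1c0 : (psi α β q).trailingCoeff = Q1.coeff 0 := by
      have h := Polynomial.coeff_X_pow_mul Q1 ((psi α β q).natTrailingDegree) 0
      rw [zero_add, ← hQ1] at h
      rw [Polynomial.trailingCoeff]
      exact h
    have hGc2i1dvd : M ^ 2 ∣ (psi α β g).coeff (2 ^ i + 1) := by
      have h1 : (psi α β g).coeff (2 ^ i + 1)
          = P1.coeff 0 * Q1.coeff 1 + P1.coeff 1 * Q1.coeff 0 := by
        rw [hGXX, add_comm (2 ^ i) 1, Polynomial.coeff_X_pow_mul, mul_coeff_one]
      rw [h1, ← hP1c0, ← hQ1c0]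
      exact dvd_add (Dvd.dvd.mul_right hdvdP _) (Dvd.dvd.mul_left hdvdQ _)
    have hGc2idvd : M ^ 2 ∣ (psi α β g).coeff (2 ^ i) := by
      have h1 : (psi α β g).coeff (2 ^ i)
          = C (((α + β) * (α + 1) * (β + 1))⁻¹) * M ^ 2 ^ i := by
        rw [← hGc2i, ← mul_assoc, ← map_mul, inv_mul_cancel₀ hc00, map_one, one_mul]
      rw [h1]
      exact Dvd.dvd.mul_left (pow_dvd_pow M (by omega : 2 ≤ 2 ^ i)) _
    have hMdF : M ^ 2 ∣ (psi α β (fpoly k)).coeff (2 ^ i + 1) := by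
      rw [hGc2i1]
      exact dvd_add (Dvd.dvd.mul_left hGc2i1dvd _) (Dvd.dvd.mul_left hGc2idvd _)
    rw [hF2i1] at hMdF
    obtain ⟨W, hW⟩ : ∃ W : R2, W = C ((α ^ (ℓ - 1)) ^ 2 ^ i) * X 0 ^ (2 ^ i - 1) +
        C ((β ^ (ℓ - 1)) ^ 2 ^ i) * X 1 ^ (2 ^ i - 1) := ⟨_, rfl⟩
    have hfac : (C (β ^ (ℓ - 1)) * X 1) ^ 2 ^ i * X 0
        + (C (α ^ (ℓ - 1)) * X 0) ^ 2 ^ i * X 1 = X 0 * X 1 * W := by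
      rw [hW]
      have hsplit : ∀ j : Fin 2, (X j : R2) ^ 2 ^ i = X j * X j ^ (2 ^ i - 1) := by
        intro j
        conv_lhs => rw [show 2 ^ i = 1 + (2 ^ i - 1) by omega]
        rw [pow_add, pow_one]
      rw [mul_pow, mul_pow, ← map_pow, ← map_pow, hsplit 0, hsplit 1]
      ring
    rw [hfac] at hMdF
    have hMW : M ∣ W := by
      have h1 : M ∣ X 0 * X 1 * W := dvd_trans (dvd_pow_self M two_ne_zero) hMdF
      rcases hMprime.dvd_mul.mp (by rwa [mul_assoc] at h1) with h | h
      · exact absurd h hMX0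
      rcases hMprime.dvd_mul.mp h with h | h
      · exact absurd h hMX1
      exact h
    obtain ⟨W1, hW1⟩ := hMW
    have hMW1 : M ∣ W1 := by
      obtain ⟨u, hu⟩ := hMdF
      rw [hW1] at hu
      have h2 : M * (X 0 * X 1 * W1) = M * (M * u) := by linear_combination hu
      have h3 : X 0 * X 1 * W1 = M * u := mul_left_cancel₀ hMprime.ne_zero h2
      have h4 : M ∣ X 0 * X 1 * W1 := ⟨u, h3⟩
      rcases hMprime.dvd_mul.mp (by rwa [mul_assoc] at h4) with h | h
      · exact absurd h hMX0
      rcases hMprime.dvd_mul.mp h with h | h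
      · exact absurd h hMX1
      exact h
    obtain ⟨W2, hW2⟩ := hMW1
    have hWM2 : W = M ^ 2 * W2 := by rw [hW1, hW2]; ring
    have hpdW : pderiv (0 : Fin 2) W = C ((α ^ (ℓ - 1)) ^ 2 ^ i) * X 0 ^ (2 ^ i - 2) := by
      have h2i4 : 4 ≤ 2 ^ i := by
        have := hab
        omega
      have heven : 2 ^ i = 2 ^ (i - 1) + 2 ^ (i - 1) := by
        conv_lhs => rw [show i = (i - 1) + 1 by omega]
        rw [pow_succ]
        omega
      have hodd : Odd (2 ^ i - 1) :=
        Nat.Even.sub_odd (by omega) ⟨2 ^ (i - 1), heven⟩ odd_one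
      have hX0d : pderiv (0 : Fin 2) ((X 0 : R2) ^ (2 ^ i - 1)) = X 0 ^ (2 ^ i - 2) := by
        rw [Derivation.leibniz_pow, pderiv_X_self, smul_eq_mul, mul_one, nsmul_eq_mul,
          odd_cast_eq_one h2R hodd, one_mul, show 2 ^ i - 1 - 1 = 2 ^ i - 2 by omega]
      have hX1d : pderiv (0 : Fin 2) ((X 1 : R2) ^ (2 ^ i - 1)) = 0 := by
        rw [Derivation.leibniz_pow, pderiv_X_of_ne (by decide : (1 : Fin 2) ≠ 0),
          smul_zero, smul_zero]
      rw [hW, map_add, pderiv_C_mul, pderiv_C_mul, hX0d, hX1d, mul_zero, add_zero]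
    have hMpd : M ∣ pderiv (0 : Fin 2) W := by
      rw [hWM2]
      have h2 : pderiv (0 : Fin 2) (M ^ 2) = 0 := by
        rw [Derivation.leibniz_pow, nsmul_eq_mul, Nat.cast_ofNat, h2R, zero_mul]
      have h1 : pderiv (0 : Fin 2) (M ^ 2 * W2)
          = M ^ 2 * pderiv (0 : Fin 2) W2 + W2 * pderiv (0 : Fin 2) (M ^ 2) := by
        rw [Derivation.leibniz, smul_eq_mul, smul_eq_mul]
      rw [h1, h2, mul_zero, add_zero]
      exact dvd_mul_of_dvd_left (dvd_pow_self M two_ne_zero) _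
    rw [hpdW] at hMpd
    rcases hMprime.dvd_mul.mp hMpd with h | h
    · exact pow_ne_zero (2 ^ i) ha1 (by simpa using hdvdeval _ h)
    · exact hMX0 (hMprime.dvd_of_dvd_pow h)
  -- combinatorial case analysis
  have hNchoice : 2 ^ i = 2 ∨ 4 ≤ 2 ^ i := by
    rcases eq_or_lt_of_le hi with h | h
    · left; rw [← h, pow_one]
    · right
      calc (4 : ℕ) = 2 ^ 2 := by norm_num
      _ ≤ 2 ^ i := Nat.pow_le_pow_right (by norm_num) h
  have hnotboth : ¬ ((∃ j₀ : Fin n, multAt α β (f j₀) = 2 ^ i ∧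
        ∀ j : Fin n, j ≠ j₀ → multAt α β (f j) = 0) ∧
      (∃ j₁ j₂ : Fin n, j₁ ≠ j₂ ∧
        multAt α β (f j₁) = 1 ∧ multAt α β (f j₂) = 2 ^ i - 1 ∧
        ∀ j : Fin n, j ≠ j₁ → j ≠ j₂ → multAt α β (f j) = 0)) := by
    rintro ⟨⟨j₀, hj₀, hz⟩, j₁, j₂, hne, h1, h2, -⟩
    by_cases hj : j₁ = j₀
    · have hj2 : j₂ ≠ j₀ := fun hh => hne (hj.trans hh.symm)
      have := hz j₂ hj2
      omega
    · have := hz j₁ hj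
      omega
  rcases comb (fun j => multAt α β (f j)) hsumv hNchoice with hc | hc | hc
  · exact Or.inl ⟨hc, fun hb => hnotboth ⟨hc, hb⟩⟩
  · exact Or.inr ⟨hc, fun ha => hnotboth ⟨ha, hc⟩⟩
  · obtain ⟨T, hT1, hT2⟩ := hc
    exact (hnosplit T hT1 hT2).elim

end

end ST19


/-- Let `k = 2^i·ℓ` (`ℓ` odd, `i ≥ 1`), let `g_k` over the algebraic closure of
`𝔽₂` satisfy `(x+y)(x+1)(y+1)·g_k = f_k`, and let `g_k = ∏ j, f j` be a factorization into
irreducible factors.  If `P = (α,β)` is a Type III singular point of `g_k` (`α^ℓ = β^ℓ = 1`,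
`α ≠ β`, `α ≠ 1`, `β ≠ 1`), then exactly one of the following holds: (1) exactly one factor
has multiplicity `2^i` at `P` and all others have multiplicity `0`; or (2) exactly two
distinct factors have nonzero multiplicity at `P`, one of multiplicity `1` and one of
multiplicity `2^i - 1`, and all others have multiplicity `0`. -/
theorem multiplicity_distribution_at_type_III
    (i ℓ k : ℕ) (hi : 1 ≤ i) (hℓ : Odd ℓ) (hk : k = 2 ^ i * ℓ)
    (g : MvPolynomial (Fin 2) Kbar)
    (hg : (X 0 + X 1) * (X 0 + 1) * (X 1 + 1) * g = fpoly k)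
    (n : ℕ) (f : Fin n → MvPolynomial (Fin 2) Kbar)
    (hirr : ∀ j, Irreducible (f j)) (hprod : ∏ j, f j = g)
    (α β : Kbar) (hα : α ^ ℓ = 1) (hβ : β ^ ℓ = 1)
    (hαβ : α ≠ β) (hα1 : α ≠ 1) (hβ1 : β ≠ 1) :
    Xor'
      (∃ j₀ : Fin n, multAt α β (f j₀) = 2 ^ i ∧
        ∀ j : Fin n, j ≠ j₀ → multAt α β (f j) = 0)
      (∃ j₁ j₂ : Fin n, j₁ ≠ j₂ ∧
        multAt α β (f j₁) = 1 ∧ multAt α β (f j₂) = 2 ^ i - 1 ∧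
        ∀ j : Fin n, j ≠ j₁ → j ≠ j₂ → multAt α β (f j) = 0) := by
  exact ST19.main i ℓ k hi hℓ hk g hg n f hirr hprod α β hα hβ hαβ hα1 hβ1
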